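/- arXiv:1506.00830 — 7 statements merged into one kernel-verified Lean document; each statement's English description precedes it below -/
import Mathlib

section
/- For the symmetric group S_n acting on ℝ^n by permuting coordinates, with basic invariants the elementary symmetric polynomials p_a(x) = s_a(x_1,...,x_n) for a = 1,...,n, the scalar products of gradients satisfy ∇p_a(x)·∇p_b(x) = (n+1-min(a,b))·p_{a-1}(x)·p_{b-1}(x) − Σ_{i=max(1,a+b−n−1)}^{min(a,b)} (a+b−2i)·p_{i−1}(x)·p_{a+b−1−i}(x) for all a,b = 1,...,n and all x ∈ ℝ^n, where by convention p_0(x) = 1 and p_c(x) = 0 for c > n or c < 0. -/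
/-!
Write `f_k = ∂ⱼ e_{k+1}`; it is the `k`-th elementary symmetric polynomial in the variables
other than `x_j`, so `e_{k+1} = f_{k+1} + x_j f_k`, and double counting gives
`∑ⱼ f_k = (n - k) e_k`.
Substituting the first relation, the `x_j` terms cancel in `f_p f_{q+1} - f_{p+1} f_q`, which
equals `f_p e_{q+1} - e_{p+1} f_q`; summing over `j` turns this into a recursion for
`g(p, q) = ∑ⱼ f_p f_q` moving one unit from `q` to `p`. Induction on `p`, starting from
`g(0, q) = (n - q) e_q`, solves it:
`g(p, q) = (n - p) e_p e_q - ∑_{m ≤ p} (p + q - 2m) e_m e_{p+q-m}`.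
The theorem is the case `p = a - 1 ≤ q = b - 1`, after dropping the terms with
`a + b - 1 - i > n`, which vanish.
-/

open MvPolynomial Finset

theorem Multiset.esymm_cons_succ {R : Type*} [CommSemiring R] (a : R) (s : Multiset R) (k : ℕ) :
    (a ::ₘ s).esymm (k + 1) = s.esymm (k + 1) + a * s.esymm k := by
  simp [Multiset.esymm, Multiset.powersetCard_cons, Multiset.sum_map_mul_left]

theorem Finset.sum_sum_powersetCard_erase {α M : Type*} [DecidableEq α] [AddCommMonoid M]
    (s : Finset α) (k : ℕ) (f : Finset α → M) :
    ∑ j ∈ s, ∑ t ∈ (s.erase j).powersetCard k, f t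
      = (#s - k) • ∑ t ∈ s.powersetCard k, f t := by
  have hfilter (j : α) : (s.erase j).powersetCard k = {t ∈ s.powersetCard k | j ∉ t} := by
    ext t; simp only [mem_powersetCard, subset_erase, mem_filter]; tauto
  simp_rw [hfilter, sum_filter]
  rw [sum_comm, smul_sum]
  refine sum_congr rfl fun t ht => ?_
  rw [mem_powersetCard] at ht
  rw [← sum_filter, sum_const, filter_notMem_eq_sdiff, card_sdiff_of_subset ht.1, ht.2]

namespace MvPolynomial

variable {σ R : Type*} [CommRing R]

theorem esymm_eq_zero_of_card_lt [Fintype σ] {k : ℕ} (hk : Fintype.card σ < k) :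
    esymm σ R k = 0 := by
  simp [esymm, powersetCard_eq_empty.2 hk]

theorem pderiv_prod_X_of_notMem [DecidableEq σ] {j : σ} {t : Finset σ} (h : j ∉ t) :
    pderiv j (∏ i ∈ t, (X i : MvPolynomial σ R)) = 0 := by
  induction t using Finset.induction_on with
  | empty => simp
  | insert a t ha ih =>
    rw [mem_insert, not_or] at h
    rw [prod_insert ha, pderiv_mul, ih h.2, pderiv_X_of_ne (Ne.symm h.1), mul_zero, zero_mul,
      add_zero]

variable [Fintype σ] [DecidableEq σ]

noncomputable def esymmErase (j : σ) (k : ℕ) : MvPolynomial σ R :=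
  ∑ t ∈ (univ.erase j).powersetCard k, ∏ i ∈ t, X i

@[simp]
theorem esymmErase_zero (j : σ) : (esymmErase j 0 : MvPolynomial σ R) = 1 := by
  simp [esymmErase]

theorem esymm_succ_eq_esymmErase (j : σ) (k : ℕ) :
    esymm σ R (k + 1) = esymmErase j (k + 1) + X j * esymmErase j k := by
  simp only [esymmErase, ← Finset.esymm_map_val, esymm_eq_multiset_esymm]
  rw [← insert_erase (mem_univ j), insert_val_of_notMem (notMem_erase j _), Multiset.map_cons,
    Multiset.esymm_cons_succ, erase_insert (notMem_erase j _)]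

theorem pderiv_esymmErase (j : σ) (k : ℕ) :
    pderiv j (esymmErase j k : MvPolynomial σ R) = 0 := by
  rw [esymmErase, map_sum]
  exact sum_eq_zero fun t ht => pderiv_prod_X_of_notMem fun hj =>
    notMem_erase j univ ((mem_powersetCard.1 ht).1 hj)

theorem pderiv_esymm_succ (j : σ) (k : ℕ) :
    pderiv j (esymm σ R (k + 1)) = esymmErase j k := by
  simp [esymm_succ_eq_esymmErase j, pderiv_esymmErase]

theorem sum_esymmErase (k : ℕ) :
    ∑ j, (esymmErase j k : MvPolynomial σ R)
      = (Fintype.card σ - k : MvPolynomial σ R) * esymm σ R k := by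
  have h : ∑ j, (esymmErase j k : MvPolynomial σ R) = (Fintype.card σ - k) • esymm σ R k :=
    sum_sum_powersetCard_erase _ _ _
  rcases le_or_gt k (Fintype.card σ) with hk | hk
  · rw [h, nsmul_eq_mul, Nat.cast_sub hk]
  · simp [h, esymm_eq_zero_of_card_lt hk]

theorem sum_esymmErase_mul_sub_sum_esymmErase_mul (p q : ℕ) :
    ∑ j, (esymmErase j p * esymmErase j (q + 1) : MvPolynomial σ R)
        - ∑ j, esymmErase j (p + 1) * esymmErase j q
      = (Fintype.card σ - p : MvPolynomial σ R) * esymm σ R p * esymm σ R (q + 1)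
        - (Fintype.card σ - q : MvPolynomial σ R) * esymm σ R (p + 1) * esymm σ R q := by
  have hj (j : σ) : (esymmErase j p * esymmErase j (q + 1) : MvPolynomial σ R)
      - esymmErase j (p + 1) * esymmErase j q
        = esymmErase j p * esymm σ R (q + 1) - esymm σ R (p + 1) * esymmErase j q := by
    rw [esymm_succ_eq_esymmErase j p, esymm_succ_eq_esymmErase j q]
    ring
  rw [← sum_sub_distrib, sum_congr rfl fun j _ => hj j, sum_sub_distrib, ← sum_mul, ← mul_sum,
    sum_esymmErase, sum_esymmErase]
  ring

theorem sum_esymmErase_mul_esymmErase (p q : ℕ) :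
    ∑ j, (esymmErase j p * esymmErase j q : MvPolynomial σ R)
      = (Fintype.card σ - p : MvPolynomial σ R) * esymm σ R p * esymm σ R q
        - ∑ m ∈ range (p + 1),
            (((p + q : ℕ) : MvPolynomial σ R) - 2 * m) * esymm σ R m
              * esymm σ R (p + q - m) := by
  induction p generalizing q with
  | zero => simp [sum_esymmErase, sub_mul]
  | succ p ih =>
    have h := sum_esymmErase_mul_sub_sum_esymmErase_mul (σ := σ) (R := R) p q
    rw [ih, show p + (q + 1) = p + 1 + q by ring] at h
    rw [sum_range_succ, Nat.add_sub_cancel_left]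
    push_cast at h ⊢
    linear_combination -h

theorem sum_pderiv_esymm_mul_pderiv_esymm {a b : ℕ}
    (ha : 1 ≤ a) (han : a ≤ Fintype.card σ) (hb : 1 ≤ b) (hbn : b ≤ Fintype.card σ) :
    ∑ j, pderiv j (esymm σ R a) * pderiv j (esymm σ R b)
      = ((Fintype.card σ + 1 - min a b : ℕ) : MvPolynomial σ R)
          * esymm σ R (a - 1) * esymm σ R (b - 1)
        - ∑ i ∈ Icc (max 1 (a + b - Fintype.card σ - 1)) (min a b),
            ((a + b - 2 * i : ℕ) : MvPolynomial σ R) * esymm σ R (i - 1)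
              * esymm σ R (a + b - 1 - i) := by
  wlog hab : a ≤ b generalizing a b
  · have h := this hb hbn ha han (by omega)
    simp only [mul_comm (pderiv _ (esymm σ R b)), min_comm b, add_comm b] at h
    rw [h, mul_right_comm]
  obtain ⟨p, rfl⟩ : ∃ p, a = p + 1 := ⟨a - 1, by omega⟩
  obtain ⟨q, rfl⟩ : ∃ q, b = q + 1 := ⟨b - 1, by omega⟩
  have hreindex : ∑ i ∈ Icc (max 1 (p + 1 + (q + 1) - Fintype.card σ - 1)) (p + 1),
        ((p + 1 + (q + 1) - 2 * i : ℕ) : MvPolynomial σ R) * esymm σ R (i - 1)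
          * esymm σ R (p + 1 + (q + 1) - 1 - i)
      = ∑ m ∈ range (p + 1),
          (((p + q : ℕ) : MvPolynomial σ R) - 2 * m) * esymm σ R m
            * esymm σ R (p + q - m) := by
    rw [sum_subset (Icc_subset_Icc_left (le_max_left 1 _)), ← Ico_add_one_right_eq_Icc,
      sum_Ico_eq_sum_range]
    · refine sum_congr (by simp) fun m hm => ?_
      rw [mem_range] at hm
      rw [Nat.cast_sub (by omega), show 1 + m - 1 = m by omega,
        show p + 1 + (q + 1) - 1 - (1 + m) = p + q - m by omega]
      push_cast
      ring
    · intro i hi hi'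
      simp only [mem_Icc] at hi hi'
      rw [esymm_eq_zero_of_card_lt (k := p + 1 + (q + 1) - 1 - i) (by omega), mul_zero]
  rw [min_eq_left hab, hreindex, Nat.cast_sub (by omega)]
  simp only [pderiv_esymm_succ, sum_esymmErase_mul_esymmErase, Nat.add_sub_cancel]
  push_cast
  ring

end MvPolynomial

/-- Generating formula for the `P`-matrix entries of the symmetric group `Sₙ` with the
elementary symmetric polynomials as basic invariants. -/
theorem Sn_P_matrix_generating_formula (n a b : ℕ) (ha : 1 ≤ a) (han : a ≤ n)
    (hb : 1 ≤ b) (hbn : b ≤ n) (x : Fin n → ℝ) :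
    (∑ j : Fin n,
        eval x (pderiv j (esymm (Fin n) ℝ a)) * eval x (pderiv j (esymm (Fin n) ℝ b)))
      = ((n + 1 - min a b : ℕ) : ℝ) * eval x (esymm (Fin n) ℝ (a - 1)) *
          eval x (esymm (Fin n) ℝ (b - 1))
        - ∑ i ∈ Finset.Icc (max 1 (a + b - n - 1)) (min a b),
            ((a + b - 2 * i : ℕ) : ℝ) * eval x (esymm (Fin n) ℝ (i - 1)) *
              eval x (esymm (Fin n) ℝ (a + b - 1 - i)) := by
  have h := congrArg (eval x) (sum_pderiv_esymm_mul_pderiv_esymm (σ := Fin n) (R := ℝ)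
    ha (by simpa using han) hb (by simpa using hbn))
  simpa only [map_sum, map_sub, map_mul, map_natCast, Fintype.card_fin] using h
end

section
/- For the reflection group B_n acting on ℝ^n by permutations and sign changes of coordinates, with basic invariants p_a(x) = s_a(x_1²,...,x_n²) (the a-th elementary symmetric polynomial evaluated at the squared coordinates) for a = 1,...,n, one has ∇p_a(x)·∇p_b(x) = Σ_{i=max(0,a+b−n−1)}^{min(a,b)−1} 4·(a+b−1−2i)·p_i(x)·p_{a+b−1−i}(x) for all a,b = 1,...,n and all x ∈ ℝ^n, with the convention p_0(x) = 1. -/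
open MvPolynomial Finset

/-! Write `yᵢ = xᵢ²`, `e_k` for the elementary symmetric functions of the `yᵢ` and `e⁽ʲ⁾_k`
for those with `y_j` omitted. Then `∂p_{k+1}/∂x_j = 2 x_j e⁽ʲ⁾_k`, so the left side is
`4 ∑_j y_j e⁽ʲ⁾_p e⁽ʲ⁾_q` with `p = a - 1`, `q = b - 1`. From `e_{k+1} = e⁽ʲ⁾_{k+1} + y_j e⁽ʲ⁾_k`
and `∑_j e⁽ʲ⁾_k = (n - k) e_k`, moving one unit from the second index to the first changes
this sum by `(p - q) e_{p+1} e_{q+1}`, and induction on `q` gives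
`∑_{i ≤ q} (p + q + 1 - 2i) e_i e_{p+q+1-i}`. For `q ≤ p` this is the claimed sum, up to the
terms with `p + q + 1 - i > n`, which vanish. -/

/-- The basic invariants of the reflection group `Bₙ`:
`p a = sₐ(x₁², …, xₙ²)`, the `a`-th elementary symmetric polynomial evaluated at the
squared coordinates.  Note `BnInvariant n 0 = 1` and `BnInvariant n c = 0` for `c > n`. -/
noncomputable def BnInvariant (n c : ℕ) : MvPolynomial (Fin n) ℝ :=
  bind₁ (fun i : Fin n => (X i : MvPolynomial (Fin n) ℝ) ^ 2) (esymm (Fin n) ℝ c)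

section ElementarySymmetric

variable {σ R : Type*} [CommRing R]

def esymmOn (s : Finset σ) (y : σ → R) (k : ℕ) : R :=
  ∑ t ∈ s.powersetCard k, ∏ i ∈ t, y i

variable {s : Finset σ} {y : σ → R}

@[simp]
lemma esymmOn_zero : esymmOn s y 0 = 1 := by
  simp [esymmOn]

lemma esymmOn_eq_zero_of_card_lt {k : ℕ} (h : #s < k) : esymmOn s y k = 0 := by
  rw [esymmOn, powersetCard_eq_empty.2 h, sum_empty]

lemma map_esymmOn {S : Type*} [CommRing S] (f : R →+* S) (k : ℕ) :
    f (esymmOn s y k) = esymmOn s (fun i => f (y i)) k := by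
  simp only [esymmOn, map_sum, map_prod]

variable [DecidableEq σ]

lemma esymmOn_succ_of_mem {j : σ} (hj : j ∈ s) (k : ℕ) :
    esymmOn s y (k + 1) = esymmOn (s.erase j) y (k + 1) + y j * esymmOn (s.erase j) y k := by
  have hj' : j ∉ s.erase j := notMem_erase j s
  have hnot : ∀ t ∈ powersetCard k (s.erase j), j ∉ t := fun t ht hjt =>
    hj' ((mem_powersetCard.1 ht).1 hjt)
  rw [esymmOn, ← insert_erase hj, powersetCard_succ_insert hj', erase_insert hj',
    sum_union, sum_image (fun t ht t' ht' h => by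
      rw [← erase_insert (hnot t ht), h, erase_insert (hnot t' ht')]),
    esymmOn, esymmOn, mul_sum]
  · exact congrArg _ (sum_congr rfl fun t ht => prod_insert (hnot t ht))
  · refine disjoint_left.2 fun t ht htim => ?_
    obtain ⟨t', -, rfl⟩ := mem_image.1 htim
    exact hj' ((mem_powersetCard.1 ht).1 (mem_insert_self j t'))

lemma sum_esymmOn_erase (k : ℕ) :
    ∑ j ∈ s, esymmOn (s.erase j) y k = ((#s : R) - k) * esymmOn s y k := by
  rcases lt_or_ge #s k with hk | hk
  · rw [esymmOn_eq_zero_of_card_lt hk, mul_zero]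
    exact sum_eq_zero fun j _ => esymmOn_eq_zero_of_card_lt ((card_erase_le).trans_lt hk)
  have herase : ∀ j, (s.erase j).powersetCard k = (s.powersetCard k).filter (j ∉ ·) := by
    intro j
    ext t
    simp only [mem_powersetCard, mem_filter, subset_erase]
    tauto
  simp only [esymmOn, herase, sum_filter]
  rw [sum_comm, mul_sum]
  refine sum_congr rfl fun t ht => ?_
  obtain ⟨hts, rfl⟩ := mem_powersetCard.1 ht
  rw [← sum_filter, sum_const, filter_notMem_eq_sdiff, card_sdiff_of_subset hts, nsmul_eq_mul,
    Nat.cast_sub (card_le_card hts)]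

lemma sum_mul_esymmOn_erase (k : ℕ) :
    ∑ j ∈ s, y j * esymmOn (s.erase j) y k = (k + 1) * esymmOn s y (k + 1) := by
  have h : ∀ j ∈ s, y j * esymmOn (s.erase j) y k
      = esymmOn s y (k + 1) - esymmOn (s.erase j) y (k + 1) := fun j hj => by
    rw [esymmOn_succ_of_mem hj k]; ring
  rw [sum_congr rfl h, sum_sub_distrib, sum_const, nsmul_eq_mul, sum_esymmOn_erase]
  push_cast
  ring

lemma sum_mul_esymmOn_erase_mul_esymmOn_erase_succ (p q : ℕ) :
    ∑ j ∈ s, y j * esymmOn (s.erase j) y p * esymmOn (s.erase j) y (q + 1)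
      = ∑ j ∈ s, y j * esymmOn (s.erase j) y (p + 1) * esymmOn (s.erase j) y q
        + ((p : R) - q) * esymmOn s y (p + 1) * esymmOn s y (q + 1) := by
  have h : ∀ j ∈ s, y j * esymmOn (s.erase j) y p * esymmOn (s.erase j) y (q + 1)
      - y j * esymmOn (s.erase j) y (p + 1) * esymmOn (s.erase j) y q
      = esymmOn s y (p + 1) * esymmOn (s.erase j) y (q + 1)
        - esymmOn (s.erase j) y (p + 1) * esymmOn s y (q + 1) := fun j hj => by
    rw [esymmOn_succ_of_mem hj p, esymmOn_succ_of_mem hj q]; ring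
  rw [← sub_eq_iff_eq_add', ← sum_sub_distrib, sum_congr rfl h, sum_sub_distrib, ← mul_sum,
    ← sum_mul, sum_esymmOn_erase, sum_esymmOn_erase]
  push_cast
  ring

theorem sum_mul_esymmOn_erase_mul_esymmOn_erase (p q : ℕ) :
    ∑ j ∈ s, y j * esymmOn (s.erase j) y p * esymmOn (s.erase j) y q
      = ∑ i ∈ range (q + 1),
          ((p : R) + q + 1 - 2 * i) * esymmOn s y i * esymmOn s y (p + q + 1 - i) := by
  induction q generalizing p with
  | zero =>
    simp [sum_mul_esymmOn_erase]
  | succ q ih =>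
    rw [sum_mul_esymmOn_erase_mul_esymmOn_erase_succ, ih, sum_range_succ _ (q + 1),
      show p + (q + 1) + 1 - (q + 1) = p + 1 by omega]
    congr 1
    · refine sum_congr rfl fun i _ => ?_
      rw [add_right_comm p 1 q, ← add_assoc p q 1]
      push_cast
      ring
    · push_cast
      ring

end ElementarySymmetric

lemma Derivation.map_esymmOn_eq_zero {σ K A M : Type*} [CommRing K] [CommRing A] [Algebra K A]
    [AddCommGroup M] [Module A M] [Module K M] (D : Derivation K A M) {s : Finset σ}
    {y : σ → A} (h : ∀ i ∈ s, D (y i) = 0) (k : ℕ) : D (esymmOn s y k) = 0 := by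
  refine (map_sum D _ _).trans (sum_eq_zero fun t ht => ?_)
  refine prod_induction _ (fun a => D a = 0) (fun a b ha hb => ?_) D.map_one_eq_zero
    fun i hi => h i ((mem_powersetCard.1 ht).1 hi)
  rw [D.leibniz, ha, hb, smul_zero, smul_zero, add_zero]

lemma BnInvariant_eq_esymmOn (n c : ℕ) :
    BnInvariant n c = esymmOn univ (fun i => (X i : MvPolynomial (Fin n) ℝ) ^ 2) c := by
  simp only [BnInvariant, esymm, esymmOn, map_sum, map_prod, bind₁_X_right]

lemma eval_BnInvariant {n : ℕ} (x : Fin n → ℝ) (c : ℕ) :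
    eval x (BnInvariant n c) = esymmOn univ (fun i => x i ^ 2) c := by
  simp [BnInvariant_eq_esymmOn, map_esymmOn]

lemma eval_pderiv_BnInvariant_succ {n : ℕ} (x : Fin n → ℝ) (j : Fin n) (k : ℕ) :
    eval x (pderiv j (BnInvariant n (k + 1)))
      = 2 * x j * esymmOn (univ.erase j) (fun i => x i ^ 2) k := by
  have hfree : ∀ m, pderiv j
      (esymmOn (univ.erase j) (fun i => (X i : MvPolynomial (Fin n) ℝ) ^ 2) m) = 0 :=
    (pderiv j).map_esymmOn_eq_zero fun i hi => by
      rw [pderiv_pow, pderiv_X_of_ne (ne_of_mem_erase hi), mul_zero]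
  rw [BnInvariant_eq_esymmOn, esymmOn_succ_of_mem (mem_univ j) k, map_add, pderiv_mul, hfree,
    hfree, pderiv_pow, pderiv_X_self]
  simp [map_esymmOn]

theorem Bn_P_matrix_generating_formula_general (n a b : ℕ) (ha : 1 ≤ a) (hb : 1 ≤ b) (x : Fin n → ℝ) :
    (∑ j : Fin n,
        eval x (pderiv j (BnInvariant n a)) * eval x (pderiv j (BnInvariant n b)))
      = ∑ i ∈ Finset.Icc (a + b - n - 1) (min a b - 1),
          ((4 * (a + b - 1 - 2 * i) : ℕ) : ℝ) * eval x (BnInvariant n i) *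
            eval x (BnInvariant n (a + b - 1 - i)) := by
  wlog hba : b ≤ a generalizing a b
  · rw [add_comm a b, min_comm a b, ← this b a hb ha (le_of_not_ge hba)]
    exact sum_congr rfl fun j _ => mul_comm _ _
  obtain ⟨p, rfl⟩ : ∃ p, a = p + 1 := ⟨a - 1, by omega⟩
  obtain ⟨q, rfl⟩ : ∃ q, b = q + 1 := ⟨b - 1, by omega⟩
  set e := esymmOn univ (fun i => x i ^ 2)
  simp only [eval_pderiv_BnInvariant_succ, eval_BnInvariant]
  calc _ = 4 * ∑ j, x j ^ 2 * esymmOn (univ.erase j) (fun i => x i ^ 2) p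
              * esymmOn (univ.erase j) (fun i => x i ^ 2) q := by
        rw [mul_sum]
        exact sum_congr rfl fun j _ => by ring
    _ = ∑ i ∈ range (q + 1), 4 * (((p : ℝ) + q + 1 - 2 * i) * e i * e (p + q + 1 - i)) := by
        rw [sum_mul_esymmOn_erase_mul_esymmOn_erase, mul_sum]
    _ = ∑ i ∈ Icc (p + q + 1 - n) q,
          4 * (((p : ℝ) + q + 1 - 2 * i) * e i * e (p + q + 1 - i)) := by
        refine (sum_subset (fun i hi => ?_) fun i hi hi' => ?_).symm
        · simp only [mem_Icc, mem_range] at hi ⊢; omega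
        · have : #(univ : Finset (Fin n)) < p + q + 1 - i := by
            simp only [mem_Icc, mem_range, card_univ, Fintype.card_fin] at hi hi' ⊢; omega
          rw [show e (p + q + 1 - i) = 0 from esymmOn_eq_zero_of_card_lt this, mul_zero, mul_zero]
    _ = _ := by
        rw [show p + 1 + (q + 1) - n - 1 = p + q + 1 - n by omega,
          show min (p + 1) (q + 1) - 1 = q by omega, show p + 1 + (q + 1) - 1 = p + q + 1 by omega]
        refine sum_congr rfl fun i hi => ?_
        rw [mem_Icc] at hi
        rw [Nat.cast_mul, Nat.cast_sub (by omega)]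
        push_cast
        ring

/-- Generating formula for the `P`-matrix entries of the reflection group `Bₙ`. -/
theorem Bn_P_matrix_generating_formula (n a b : ℕ) (ha : 1 ≤ a) (han : a ≤ n)
    (hb : 1 ≤ b) (hbn : b ≤ n) (x : Fin n → ℝ) :
    (∑ j : Fin n,
        eval x (pderiv j (BnInvariant n a)) * eval x (pderiv j (BnInvariant n b)))
      = ∑ i ∈ Finset.Icc (a + b - n - 1) (min a b - 1),
          ((4 * (a + b - 1 - 2 * i) : ℕ) : ℝ) * eval x (BnInvariant n i) *
            eval x (BnInvariant n (a + b - 1 - i)) :=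
  Bn_P_matrix_generating_formula_general n a b ha hb x
end

section
/- Let p_a(x) = s_a(x_1²,...,x_n²) for a = 1,...,n be the basic invariants of B_n and define the n×n matrix P(x) with entries P_{ab}(x) = ∇p_a(x)·∇p_b(x). Then det(P(x)) = 4^n · (∏_{i=1}^n x_i²) · (∏_{1≤i<j≤n} (x_i² − x_j²)²) for all x ∈ ℝ^n. -/
open MvPolynomial Finset
open Matrix

def BnE {n : ℕ} (y : Fin n → ℝ) (j : Fin n) (a : ℕ) : ℝ :=
  ∑ t ∈ powersetCard a (univ.erase j), ∏ i ∈ t, y i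

lemma BnE_eq_esymm {n : ℕ} (y : Fin n → ℝ) (j : Fin n) (a : ℕ) :
    BnE y j a = Multiset.esymm ((univ.erase j).val.map y) a :=
  (Finset.esymm_map_val y _ a).symm

lemma pderiv_prod_sq {n : ℕ} (j : Fin n) (t : Finset (Fin n)) :
    pderiv j (∏ i ∈ t, (X i : MvPolynomial (Fin n) ℝ) ^ 2) =
      if j ∈ t then 2 * X j * ∏ i ∈ t.erase j, (X i : MvPolynomial (Fin n) ℝ) ^ 2 else 0 := by
  induction t using Finset.induction with
  | empty => simp
  | @insert a t ha ih =>
    rw [Finset.prod_insert ha, pderiv_mul, ih, pderiv_pow, pderiv_X]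
    by_cases h : j = a
    · subst h
      simp [ha, Finset.erase_insert ha]
    · rw [Pi.single_eq_of_ne (Ne.symm h)]
      by_cases hjt : j ∈ t
      · rw [Finset.erase_insert_of_ne (Ne.symm h)]
        simp only [h, hjt, if_true, Finset.mem_insert, false_or,
          Finset.prod_insert (show a ∉ t.erase j from fun hc => ha (Finset.mem_of_mem_erase hc))]
        ring
      · simp [h, hjt, Finset.mem_insert]

lemma BnInvariant_eq (n c : ℕ) :
    BnInvariant n c = ∑ t ∈ powersetCard c univ, ∏ i ∈ t, (X i : MvPolynomial (Fin n) ℝ) ^ 2 := by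
  rw [BnInvariant, esymm, map_sum]
  refine Finset.sum_congr rfl fun t _ => ?_
  rw [map_prod]
  exact Finset.prod_congr rfl fun i _ => bind₁_X_right _ i

lemma eval_pderiv_BnInvariant {n : ℕ} (x : Fin n → ℝ) (j : Fin n) (a : ℕ) :
    eval x (pderiv j (BnInvariant n (a + 1))) = 2 * x j * BnE (fun i => x i ^ 2) j a := by
  rw [BnInvariant_eq, map_sum]
  simp only [pderiv_prod_sq]
  rw [Finset.sum_ite, Finset.sum_const_zero, add_zero, map_sum]
  rw [BnE, Finset.mul_sum]
  refine Finset.sum_nbij' (fun t => t.erase j) (fun t => insert j t) ?_ ?_ ?_ ?_ ?_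
  · intro t ht
    simp only [Finset.mem_filter, Finset.mem_powersetCard] at ht
    simp only [Finset.mem_powersetCard]
    constructor
    · intro i hi
      exact Finset.mem_erase.2 ⟨(Finset.mem_erase.1 hi).1, Finset.mem_univ i⟩
    · rw [Finset.card_erase_of_mem ht.2, ht.1.2, Nat.add_sub_cancel]
  · intro t ht
    simp only [Finset.mem_powersetCard] at ht
    have hj : j ∉ t := fun hc => (Finset.mem_erase.1 (ht.1 hc)).1 rfl
    simp only [Finset.mem_filter, Finset.mem_powersetCard]
    exact ⟨⟨Finset.subset_univ _, by rw [Finset.card_insert_of_notMem hj, ht.2]⟩,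
      Finset.mem_insert_self j t⟩
  · intro t ht
    simp only [Finset.mem_filter] at ht
    exact Finset.insert_erase ht.2
  · intro t ht
    simp only [Finset.mem_powersetCard] at ht
    have hj : j ∉ t := fun hc => (Finset.mem_erase.1 (ht.1 hc)).1 rfl
    exact Finset.erase_insert hj
  · intro t ht
    simp only [Finset.mem_filter] at ht
    rw [_root_.map_mul, _root_.map_mul, eval_X, map_ofNat, _root_.map_prod]
    simp only [map_pow, eval_X]

lemma sum_BnE_mul_pow {n : ℕ} (y : Fin n → ℝ) (j : Fin n) (z : ℝ) :
    ∑ a : Fin n, (-1 : ℝ) ^ a.1 * BnE y j a.1 * z ^ (n - 1 - a.1) =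
      ∏ i ∈ univ.erase j, (z - y i) := by
  have hn : 0 < n := j.pos
  set m : Multiset ℝ := (univ.erase j).val.map y with hm
  have hcard : Multiset.card m = n - 1 := by
    rw [hm, Multiset.card_map, Finset.card_val, Finset.card_erase_of_mem (Finset.mem_univ j),
      Finset.card_univ, Fintype.card_fin]
  set p : Polynomial ℝ := (m.map fun t => Polynomial.X - Polynomial.C t).prod with hp
  have hdeg : p.natDegree < n := by
    rw [hp, Polynomial.natDegree_multiset_prod_X_sub_C_eq_card, hcard]
    omega
  have heval : Polynomial.eval z p = ∏ i ∈ univ.erase j, (z - y i) := by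
    rw [hp, hm, Multiset.map_map, Polynomial.eval_multiset_prod]
    rw [Multiset.map_map]
    rw [Finset.prod_eq_multiset_prod]
    congr 1
    congr 1
    ext i
    simp
  rw [← heval, Polynomial.eval_eq_sum_range' hdeg, ← Fin.sum_univ_eq_sum_range,
    ← Equiv.sum_comp Fin.revPerm (fun a : Fin n => p.coeff a.1 * z ^ a.1)]
  refine Finset.sum_congr rfl fun a _ => ?_
  have hrev : ((Fin.revPerm a : Fin n) : ℕ) = n - 1 - a.1 := by rw [show ((Fin.revPerm a : Fin n) : ℕ) = (Fin.rev a : ℕ) from rfl, Fin.val_rev]; omega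
  have hle : a.1 ≤ n - 1 := by omega
  have hcoeff : p.coeff (n - 1 - a.1) = (-1 : ℝ) ^ a.1 * BnE y j a.1 := by
    rw [hp, Multiset.prod_X_sub_C_coeff m (by omega), hcard,
      Nat.sub_sub_self hle, BnE_eq_esymm]
  rw [hrev, hcoeff]

lemma BnE_congr {n : ℕ} {y : Fin n → ℝ} {i1 i2 : Fin n} (h : y i1 = y i2) (a : ℕ) :
    BnE y i1 a = BnE y i2 a := by
  rw [BnE_eq_esymm, BnE_eq_esymm]
  congr 1
  have key : ∀ i : Fin n, (univ : Finset (Fin n)).val.map y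
      = y i ::ₘ ((univ.erase i).val.map y) := by
    intro i
    conv_lhs => rw [← Multiset.cons_erase
      (show i ∈ (univ : Finset (Fin n)).val from Finset.mem_univ_val i)]
    rw [Multiset.map_cons, Finset.erase_val]
  have h2 := (key i1).symm.trans (key i2)
  rw [h] at h2
  exact (Multiset.cons_inj_right _).1 h2

lemma BnN_det_sq {n : ℕ} (y : Fin n → ℝ) :
    (Matrix.of fun a j : Fin n => BnE y j a.1).det ^ 2 =
      ∏ i : Fin n, ∏ j ∈ Ioi i, (y i - y j) ^ 2 := by
  set D : ℝ := ∏ i : Fin n, ∏ j ∈ Ioi i, (y i - y j) ^ 2 with hD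
  set N : Matrix (Fin n) (Fin n) ℝ := Matrix.of fun a j : Fin n => BnE y j a.1 with hN
  by_cases hinj : Function.Injective y
  · set W : Matrix (Fin n) (Fin n) ℝ :=
      Matrix.of (fun j a : Fin n => (-1:ℝ)^a.1 * BnE y j a.1) with hW
    set V : Matrix (Fin n) (Fin n) ℝ :=
      Matrix.of (fun a k : Fin n => y k ^ (n-1-a.1)) with hV
    have hWV : W * V = Matrix.diagonal fun j => ∏ i ∈ univ.erase j, (y j - y i) := by
      ext j k
      rw [Matrix.mul_apply]
      have hrow : ∑ a : Fin n, W j a * V a k = ∏ i ∈ univ.erase j, (y k - y i) := by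
        rw [← sum_BnE_mul_pow y j (y k)]
        exact Finset.sum_congr rfl fun a _ => by simp [hW, hV]
      rw [hrow]
      by_cases hkj : j = k
      · subst hkj; rw [Matrix.diagonal_apply_eq]
      · rw [Matrix.diagonal_apply_ne _ hkj]
        exact Finset.prod_eq_zero
          (Finset.mem_erase.2 ⟨fun hc => hkj hc.symm, Finset.mem_univ _⟩) (sub_self _)
    have hdet : W.det * V.det = ∏ j : Fin n, ∏ i ∈ univ.erase j, (y j - y i) := by
      rw [← Matrix.det_mul, hWV, Matrix.det_diagonal]
    -- (det V)^2 = D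
    have hVD : V.det ^ 2 = D := by
      have hVsub : V = ((Matrix.vandermonde y)ᵀ).submatrix (Fin.revPerm : Equiv.Perm (Fin n)) id := by
        ext a k
        simp only [hV, Matrix.of_apply, Matrix.submatrix_apply, Matrix.transpose_apply,
          Matrix.vandermonde, id_eq]
        congr 1
        rw [show ((Fin.revPerm a : Fin n) : ℕ) = (Fin.rev a : ℕ) from rfl, Fin.val_rev]
        omega
      rw [hVsub, Matrix.det_permute, Matrix.det_transpose, Matrix.det_vandermonde, mul_pow]
      have hsgn : ((Equiv.Perm.sign (Fin.revPerm : Equiv.Perm (Fin n)) : ℤ) : ℝ)^2 = 1 := by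
        rcases Int.units_eq_one_or (Equiv.Perm.sign (Fin.revPerm : Equiv.Perm (Fin n))) with h | h <;>
          rw [h] <;> norm_num
      rw [hsgn, one_mul, hD, ← Finset.prod_pow]
      refine Finset.prod_congr rfl fun i _ => ?_
      rw [← Finset.prod_pow]
      exact Finset.prod_congr rfl fun j _ => by ring
    -- (det W)^2 = (det N)^2
    have hWN : W.det ^ 2 = N.det ^ 2 := by
      have hWt : W = (Matrix.of fun a j : Fin n => (-1:ℝ)^a.1 * N a j)ᵀ := by
        ext j a; rfl
      rw [hWt, Matrix.det_transpose, Matrix.det_mul_column, mul_pow]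
      have h1 : (∏ a : Fin n, (-1:ℝ)^a.1)^2 = 1 := by
        rw [← Finset.prod_pow]
        rw [Finset.prod_eq_one fun a _ => by rw [← pow_mul, mul_comm, pow_mul]; norm_num]
      rw [h1, one_mul]
    -- T^2 = D^2
    have hsplit : ∀ j : Fin n, ∏ i ∈ univ.erase j, (y j - y i)
        = (∏ i ∈ Iio j, (y j - y i)) * ∏ i ∈ Ioi j, (y j - y i) := by
      intro j
      rw [← Finset.prod_union (by
        simp only [Finset.disjoint_left, Finset.mem_Iio, Finset.mem_Ioi]
        exact fun i h1 h2 => absurd h2 (not_lt.2 h1.le))]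
      refine Finset.prod_congr ?_ fun _ _ => rfl
      ext i
      simp only [Finset.mem_erase, Finset.mem_univ, and_true, Finset.mem_union,
        Finset.mem_Iio, Finset.mem_Ioi]
      exact ne_iff_lt_or_gt
    have hT : (∏ j : Fin n, ∏ i ∈ univ.erase j, (y j - y i)) ^ 2 = D ^ 2 := by
      calc (∏ j : Fin n, ∏ i ∈ univ.erase j, (y j - y i)) ^ 2
          = ((∏ j : Fin n, ∏ i ∈ Iio j, (y j - y i)) *
              ∏ j : Fin n, ∏ i ∈ Ioi j, (y j - y i)) ^ 2 := by
            rw [← Finset.prod_mul_distrib]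
            congr 1
            exact Finset.prod_congr rfl fun j _ => hsplit j
        _ = ((∏ i : Fin n, ∏ j ∈ Ioi i, (y j - y i)) *
              ∏ i : Fin n, ∏ j ∈ Ioi i, (y i - y j)) ^ 2 := by
            congr 2
            exact Finset.prod_comm' (fun j i => by
              simp only [Finset.mem_univ, true_and, and_true, Finset.mem_Iio, Finset.mem_Ioi])
        _ = D ^ 2 := by
            have hA : (∏ i : Fin n, ∏ j ∈ Ioi i, (y j - y i)) ^ 2 = D := by
              rw [hD, ← Finset.prod_pow]
              refine Finset.prod_congr rfl fun i _ => ?_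
              rw [← Finset.prod_pow]
              exact Finset.prod_congr rfl fun j _ => by ring
            have hB : (∏ i : Fin n, ∏ j ∈ Ioi i, (y i - y j)) ^ 2 = D := by
              rw [hD, ← Finset.prod_pow]
              refine Finset.prod_congr rfl fun i _ => ?_
              exact (Finset.prod_pow _ 2 _).symm
            rw [mul_pow, hA, hB, sq]
    have hD0 : D ≠ 0 := by
      rw [hD]
      refine Finset.prod_ne_zero_iff.2 fun i _ => Finset.prod_ne_zero_iff.2 fun j hj => ?_
      refine pow_ne_zero _ (sub_ne_zero.2 fun hc => ?_)
      obtain rfl := hinj hc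
      simp at hj
    have hsq := congrArg (· ^ 2) hdet
    simp only [mul_pow] at hsq
    rw [hWN, hVD, hT] at hsq
    exact mul_right_cancel₀ hD0 (by rw [hsq, sq])
  · obtain ⟨i1, i2, heq, hne⟩ : ∃ i1 i2, y i1 = y i2 ∧ i1 ≠ i2 := by
      simp only [Function.Injective, not_forall] at hinj
      obtain ⟨i1, i2, h1, h2⟩ := hinj
      exact ⟨i1, i2, h1, h2⟩
    have hN0 : N.det = 0 :=
      Matrix.det_zero_of_column_eq hne fun k => BnE_congr heq k.1
    have hD0 : D = 0 := by
      rcases lt_or_gt_of_ne hne with h | h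
      · exact Finset.prod_eq_zero (Finset.mem_univ i1)
          (Finset.prod_eq_zero (Finset.mem_Ioi.2 h) (by rw [heq, sub_self]; ring))
      · exact Finset.prod_eq_zero (Finset.mem_univ i2)
          (Finset.prod_eq_zero (Finset.mem_Ioi.2 h) (by rw [heq, sub_self]; ring))
    rw [hN0, hD0]; ring


/-- Determinant of the Gram matrix of the gradients of the `Bₙ` basic invariants:
`det P(x) = 4ⁿ · ∏ᵢ xᵢ² · ∏_{i<j} (xᵢ² - xⱼ²)²`. -/
theorem Bn_P_matrix_det (n : ℕ) (x : Fin n → ℝ) :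
    (Matrix.of fun a b : Fin n =>
        ∑ j : Fin n, eval x (pderiv j (BnInvariant n (a.1 + 1))) *
          eval x (pderiv j (BnInvariant n (b.1 + 1)))).det
      = 4 ^ n * (∏ i : Fin n, (x i) ^ 2) *
          ∏ i : Fin n, ∏ j ∈ Finset.Ioi i, ((x i) ^ 2 - (x j) ^ 2) ^ 2 := by
  set J : Matrix (Fin n) (Fin n) ℝ :=
    Matrix.of fun a j : Fin n => eval x (pderiv j (BnInvariant n (a.1 + 1))) with hJ
  have hP : (Matrix.of fun a b : Fin n =>
      ∑ j : Fin n, eval x (pderiv j (BnInvariant n (a.1 + 1))) *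
        eval x (pderiv j (BnInvariant n (b.1 + 1)))) = J * J.transpose := by
    ext a b
    rw [Matrix.mul_apply]
    rfl
  rw [hP, Matrix.det_mul, Matrix.det_transpose, ← sq]
  have hJ2 : J = Matrix.of fun a j : Fin n =>
      (2 * x j) * (Matrix.of fun a j : Fin n => BnE (fun i => x i ^ 2) j a.1) a j := by
    ext a j
    exact eval_pderiv_BnInvariant x j a.1
  rw [hJ2, Matrix.det_mul_row, mul_pow, BnN_det_sq (fun i => x i ^ 2)]
  have h4 : (∏ j : Fin n, (2 * x j)) ^ 2 = 4 ^ n * ∏ i : Fin n, x i ^ 2 := by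
    rw [← Finset.prod_pow,
      Finset.prod_congr rfl (fun i (_ : i ∈ univ) => (by ring : (2 * x i) ^ 2 = 4 * x i ^ 2)),
      Finset.prod_mul_distrib, Finset.prod_const, Finset.card_univ, Fintype.card_fin]
  rw [h4]
end

section
/- For the basic invariants p_a(x) = s_a(x_1²,...,x_n²), a = 1,...,n, of B_n, the highest-degree invariant p_n satisfies, for every a = 1,...,n and x ∈ ℝ^n: ∇p_a(x)·∇p_n(x) = 4(n−a+1)·p_{a−1}(x)·p_n(x), with p_0 = 1. In particular p_n divides each entry of the last row of the Gram matrix P(x). -/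
open MvPolynomial Finset

noncomputable def Q (n : ℕ) (S : Finset (Fin n)) : MvPolynomial (Fin n) ℝ :=
  ∏ i ∈ S, (X i) ^ 2

lemma pderiv_Q (n : ℕ) (j : Fin n) (S : Finset (Fin n)) :
    pderiv j (Q n S) = if j ∈ S then 2 * X j * Q n (S.erase j) else 0 := by
  classical
  induction S using Finset.induction_on with
  | empty => simp [Q]
  | @insert i S' hiS ih =>
    rw [Q, Finset.prod_insert hiS, pderiv_mul,
      show (∏ x ∈ S', (X x : MvPolynomial (Fin n) ℝ) ^ 2) = Q n S' from rfl, ih]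
    by_cases hji : j = i
    · subst hji
      simp only [if_pos (mem_insert_self j S'), if_neg hiS, mul_zero, add_zero]
      rw [erase_insert hiS]
      rw [pderiv_pow]
      simp [pderiv_X, Q]
    · by_cases hjS : j ∈ S'
      · rw [if_pos hjS, if_pos (mem_insert_of_mem hjS)]
        rw [pderiv_pow]
        simp [pderiv_X, Pi.single_apply, Ne.symm hji]
        rw [Finset.erase_insert_of_ne (Ne.symm hji), Q, Q,
          Finset.prod_insert (fun h => hiS (Finset.mem_of_mem_erase h))]
        ring
      · rw [if_neg hjS, if_neg (by simp [hji, hjS])]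
        rw [pderiv_pow]
        simp [pderiv_X, Pi.single_apply, Ne.symm hji]

lemma hB (n c : ℕ) : BnInvariant n c = ∑ S ∈ powersetCard c univ, Q n S := by
  simp [BnInvariant, esymm, map_sum, map_prod, Q]

lemma hpc (n : ℕ) : powersetCard n (univ : Finset (Fin n)) = {univ} := by
  simpa using Finset.powersetCard_self (univ : Finset (Fin n))

lemma hBn (n : ℕ) : BnInvariant n n = Q n univ := by
  rw [hB, hpc, Finset.sum_singleton]

lemma key (n a : ℕ) (ha : 1 ≤ a) (han : a ≤ n) :
    (∑ j : Fin n, pderiv j (BnInvariant n a) * pderiv j (BnInvariant n n))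
      = C (((4 * (n - a + 1) : ℕ) : ℝ)) * (BnInvariant n (a - 1) * BnInvariant n n) := by
  classical
  have hterm : ∀ (j : Fin n) (S : Finset (Fin n)),
      pderiv j (Q n S) * pderiv j (Q n univ)
        = if j ∈ S then (4 : MvPolynomial (Fin n) ℝ) * Q n univ * Q n (S.erase j) else 0 := by
    intro j S
    rw [pderiv_Q, pderiv_Q, if_pos (mem_univ j)]
    split
    · have h2 : (X j : MvPolynomial (Fin n) ℝ) ^ 2 * ∏ i ∈ univ.erase j, (X i : MvPolynomial (Fin n) ℝ) ^ 2
          = ∏ i : Fin n, (X i : MvPolynomial (Fin n) ℝ) ^ 2 :=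
        Finset.mul_prod_erase univ (fun i => (X i : MvPolynomial (Fin n) ℝ) ^ 2) (mem_univ j)
      simp only [Q]
      rw [← h2]; ring
    · rw [zero_mul]
  have swap :
      ∑ S ∈ powersetCard a (univ : Finset (Fin n)), ∑ j ∈ S, Q n (S.erase j)
        = ∑ T ∈ powersetCard (a - 1) (univ : Finset (Fin n)), ∑ j ∈ Tᶜ, Q n T := by
    rw [Finset.sum_sigma', Finset.sum_sigma']
    refine Finset.sum_nbij' (i := fun p => ⟨p.1.erase p.2, p.2⟩)
      (j := fun p => ⟨insert p.2 p.1, p.2⟩) ?_ ?_ ?_ ?_ ?_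
    · rintro ⟨S, j⟩ hp
      simp only [mem_sigma, mem_powersetCard_univ] at hp ⊢
      obtain ⟨h1, h2⟩ := hp
      refine ⟨by rw [card_erase_of_mem h2, h1], by simp⟩
    · rintro ⟨T, j⟩ hp
      simp only [mem_sigma, mem_powersetCard_univ, mem_compl] at hp ⊢
      obtain ⟨h1, h2⟩ := hp
      refine ⟨by rw [card_insert_of_notMem h2, h1]; omega, mem_insert_self _ _⟩
    · rintro ⟨S, j⟩ hp
      simp only [mem_sigma, mem_powersetCard_univ] at hp
      show (⟨insert j (S.erase j), j⟩ : (_ : Finset (Fin n)) × Fin n) = ⟨S, j⟩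
      rw [Finset.insert_erase hp.2]
    · rintro ⟨T, j⟩ hp
      simp only [mem_sigma, mem_powersetCard_univ, mem_compl] at hp
      show (⟨(insert j T).erase j, j⟩ : (_ : Finset (Fin n)) × Fin n) = ⟨T, j⟩
      rw [Finset.erase_insert hp.2]
    · rintro ⟨S, j⟩ hp
      rfl
  calc ∑ j : Fin n, pderiv j (BnInvariant n a) * pderiv j (BnInvariant n n)
      = ∑ j : Fin n, ∑ S ∈ powersetCard a (univ : Finset (Fin n)),
          pderiv j (Q n S) * pderiv j (Q n univ) := by
        rw [hBn, hB n a]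
        simp_rw [map_sum, Finset.sum_mul]
    _ = ∑ j : Fin n, ∑ S ∈ powersetCard a (univ : Finset (Fin n)),
          (4 : MvPolynomial (Fin n) ℝ) * Q n univ *
            (if j ∈ S then Q n (S.erase j) else 0) := by
        refine Finset.sum_congr rfl fun j _ => Finset.sum_congr rfl fun S _ => ?_
        rw [hterm, mul_ite, mul_zero]
    _ = ∑ S ∈ powersetCard a (univ : Finset (Fin n)), ∑ j ∈ S,
          (4 : MvPolynomial (Fin n) ℝ) * Q n univ * Q n (S.erase j) := by
        rw [Finset.sum_comm]
        refine Finset.sum_congr rfl fun S _ => ?_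
        simp [mul_ite, Finset.sum_ite_mem]
    _ = (4 : MvPolynomial (Fin n) ℝ) * Q n univ *
          ∑ S ∈ powersetCard a (univ : Finset (Fin n)), ∑ j ∈ S, Q n (S.erase j) := by
        rw [Finset.mul_sum]
        refine Finset.sum_congr rfl fun S _ => ?_
        rw [Finset.mul_sum]
    _ = (4 : MvPolynomial (Fin n) ℝ) * Q n univ *
          ((n - a + 1) • ∑ T ∈ powersetCard (a - 1) (univ : Finset (Fin n)), Q n T) := by
        rw [swap, Finset.smul_sum]
        refine congrArg _ (Finset.sum_congr rfl fun T hT => ?_)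
        rw [Finset.sum_const]
        congr 1
        rw [Finset.card_compl, Fintype.card_fin, (mem_powersetCard_univ.mp hT)]
        omega
    _ = C (((4 * (n - a + 1) : ℕ) : ℝ)) * (BnInvariant n (a - 1) * BnInvariant n n) := by
        rw [hB n (a-1), hBn, nsmul_eq_mul, map_natCast]
        push_cast
        ring

/-- For `Bₙ`, `∇pₐ·∇pₙ = 4(n-a+1)·p_{a-1}·pₙ`; in particular `pₙ` divides every entry of
the last row of the Gram matrix. -/
theorem Bn_P_matrix_last_row (n a : ℕ) (ha : 1 ≤ a) (han : a ≤ n) :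
    (∀ x : Fin n → ℝ,
        ∑ j : Fin n, eval x (pderiv j (BnInvariant n a)) *
            eval x (pderiv j (BnInvariant n n))
          = ((4 * (n - a + 1) : ℕ) : ℝ) * eval x (BnInvariant n (a - 1)) *
              eval x (BnInvariant n n))
    ∧ BnInvariant n n ∣
        ∑ j : Fin n, pderiv j (BnInvariant n a) * pderiv j (BnInvariant n n) := by
  have h := key n a ha han
  constructor
  · intro x
    have h2 := congrArg (eval x) h
    simp only [map_sum, map_mul, eval_C] at h2
    rw [h2]; ring
  · rw [h]
    exact ⟨C (((4 * (n - a + 1) : ℕ) : ℝ)) * BnInvariant n (a - 1), by ring⟩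
end

section
/- Let p_a be the a-th elementary symmetric polynomial in n+1 variables (group S_{n+1} vs. S_n). Writing y = (x_1,...,x_n,x_{n+1}) and x = (x_1,...,x_n), the recursion p_a(y) = p_a(x) + p_{a−1}(x)·x_{n+1} holds for all a = 1,...,n+1, where p_0(x) = 1 and p_{n+1}(x) = 0. Consequently, the Gram matrix entries satisfy P_{ab}(y) = P_{ab}(x) + x_{n+1}·[P_{a,b−1}(x) + P_{a−1,b}(x)] + x_{n+1}²·P_{a−1,b−1}(x) + p_{a−1}(x)·p_{b−1}(x), where P_{cd}(x) = ∇_x p_c(x)·∇_x p_d(x) with the convention P_{cd}(x) = 0 if c or d equals 0 or n+1. -/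
open MvPolynomial Finset

lemma last_not_mem_map (n : ℕ) (S : Finset (Fin n)) :
    Fin.last n ∉ S.map Fin.castSuccEmb := by
  intro h
  obtain ⟨y, _, hy⟩ := Finset.mem_map.1 h
  exact y.isLt.ne (congrArg Fin.val hy)

lemma insert_inj_aux {α : Type*} [DecidableEq α] {x : α} {S T : Finset α}
    (hS : x ∉ S) (hT : x ∉ T) (h : insert x S = insert x T) : S = T := by
  have := congrArg (Finset.erase · x) h
  simpa [Finset.erase_insert, hS, hT] using this

lemma esymm_rec (n a : ℕ) :
    esymm (Fin (n+1)) ℝ (a+1)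
      = rename Fin.castSucc (esymm (Fin n) ℝ (a+1))
        + rename Fin.castSucc (esymm (Fin n) ℝ a) * X (Fin.last n) := by
  classical
  simp only [esymm, map_sum, map_prod, rename_X]
  rw [Fin.univ_castSuccEmb, Finset.cons_eq_insert,
    powersetCard_succ_insert (last_not_mem_map n univ)]
  rw [Finset.sum_union]
  · congr 1
    · rw [powersetCard_map, Finset.sum_map]
      refine Finset.sum_congr rfl fun S _ => ?_
      rw [RelEmbedding.coe_toEmbedding, Finset.mapEmbedding_apply, Finset.prod_map]
      rfl
    · rw [Finset.sum_mul, powersetCard_map, Finset.sum_image ?inj, Finset.sum_map]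
      · refine Finset.sum_congr rfl fun S _ => ?_
        rw [RelEmbedding.coe_toEmbedding, Finset.mapEmbedding_apply,
          Finset.prod_insert (last_not_mem_map n S), Finset.prod_map, mul_comm]
        rfl
      case inj =>
        intro S hS T hT hST
        obtain ⟨S', _, rfl⟩ := Finset.mem_map.1 hS
        obtain ⟨T', _, rfl⟩ := Finset.mem_map.1 hT
        exact insert_inj_aux (last_not_mem_map n S') (last_not_mem_map n T') hST
  · rw [Finset.disjoint_left]
    intro S hS hS2
    simp only [Finset.mem_image] at hS2
    obtain ⟨T, _, rfl⟩ := hS2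
    simp only [Finset.mem_powersetCard] at hS
    have := hS.1 (Finset.mem_insert_self _ _)
    exact last_not_mem_map n univ this

lemma pderiv_last_rename (n : ℕ) (p : MvPolynomial (Fin n) ℝ) :
    pderiv (Fin.last n) (rename (Fin.castSucc : Fin n → Fin (n+1)) p) = 0 := by
  induction p using MvPolynomial.induction_on with
  | C a => simp
  | add p q hp hq => simp [hp, hq]
  | mul_X p j h =>
      simp only [map_mul, rename_X, Derivation.leibniz, h, smul_eq_mul, pderiv_X,
        Pi.single_apply]
      have : Fin.last n ≠ Fin.castSucc j := (Fin.castSucc_lt_last j).ne'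
      simp [this, (Fin.castSucc_lt_last j).ne]

lemma eval_snoc_rename (n : ℕ) (x : Fin n → ℝ) (t : ℝ) (p : MvPolynomial (Fin n) ℝ) :
    eval (Fin.snoc x t) (rename (Fin.castSucc : Fin n → Fin (n+1)) p) = eval x p := by
  rw [eval_rename]
  have : Fin.snoc x t ∘ Fin.castSucc = x := by funext i; simp
  rw [this]

lemma grad_cast (n a : ℕ) (x : Fin n → ℝ) (t : ℝ) (j : Fin n) :
    eval (Fin.snoc x t) (pderiv j.castSucc (esymm (Fin (n+1)) ℝ (a+1)))
      = eval x (pderiv j (esymm (Fin n) ℝ (a+1))) + eval x (pderiv j (esymm (Fin n) ℝ a)) * t := by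
  rw [esymm_rec, map_add, Derivation.leibniz,
    pderiv_rename (Fin.castSucc_injective n), pderiv_rename (Fin.castSucc_injective n)]
  have hX : pderiv (Fin.castSucc j) (X (Fin.last n) : MvPolynomial (Fin (n+1)) ℝ) = 0 := by
    rw [pderiv_X]
    simp [Pi.single_apply, (Fin.castSucc_lt_last j).ne]
  rw [hX]
  simp [eval_snoc_rename]
  ring

lemma grad_last (n a : ℕ) (x : Fin n → ℝ) (t : ℝ) :
    eval (Fin.snoc x t) (pderiv (Fin.last n) (esymm (Fin (n+1)) ℝ (a+1)))
      = eval x (esymm (Fin n) ℝ a) := by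
  rw [esymm_rec, map_add, Derivation.leibniz, pderiv_last_rename]
  have hX : pderiv (Fin.last n) (X (Fin.last n) : MvPolynomial (Fin (n+1)) ℝ) = 1 := by
    simp [pderiv_X]
  rw [hX, pderiv_last_rename]
  simp [eval_snoc_rename]

/-- The Gram entry `P_{cd}(x) = ∇pᶜ(x)·∇pᵈ(x)` for the elementary symmetric polynomials
in `n` variables.  By convention this vanishes when an index is `0` (gradient of the
constant `1`) or exceeds `n` (gradient of the zero polynomial). -/
noncomputable def SnGram (n : ℕ) (c d : ℕ) (x : Fin n → ℝ) : ℝ :=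
  ∑ j : Fin n, eval x (pderiv j (esymm (Fin n) ℝ c)) * eval x (pderiv j (esymm (Fin n) ℝ d))

/-- Recursion from `Sₙ` to `S_{n+1}`: with `y = (x, t)`,
`pₐ(y) = pₐ(x) + p_{a-1}(x)·t`, and the Gram matrix entries satisfy
`P_{ab}(y) = P_{ab}(x) + t·[P_{a,b-1}(x) + P_{a-1,b}(x)] + t²·P_{a-1,b-1}(x)
  + p_{a-1}(x)·p_{b-1}(x)`. -/
theorem Sn_recursion (n : ℕ) (x : Fin n → ℝ) (t : ℝ) :
    (∀ a : ℕ, 1 ≤ a → a ≤ n + 1 →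
        eval (Fin.snoc x t) (esymm (Fin (n + 1)) ℝ a)
          = eval x (esymm (Fin n) ℝ a) + eval x (esymm (Fin n) ℝ (a - 1)) * t)
    ∧ (∀ a b : ℕ, 1 ≤ a → a ≤ n + 1 → 1 ≤ b → b ≤ n + 1 →
        SnGram (n + 1) a b (Fin.snoc x t)
          = SnGram n a b x
            + t * (SnGram n a (b - 1) x + SnGram n (a - 1) b x)
            + t ^ 2 * SnGram n (a - 1) (b - 1) x
            + eval x (esymm (Fin n) ℝ (a - 1)) * eval x (esymm (Fin n) ℝ (b - 1))) := by
  constructor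
  · rintro (_ | a) ha _
    · omega
    · rw [esymm_rec, map_add, map_mul, eval_snoc_rename, eval_snoc_rename, eval_X,
        Fin.snoc_last]
      simp
  · rintro (_ | a) (_ | b) ha _ hb _
    · omega
    · omega
    · omega
    · simp only [Nat.add_sub_cancel, Nat.succ_sub_one]
      unfold SnGram
      rw [Fin.sum_univ_castSucc]
      simp only [grad_cast, grad_last]
      simp only [Finset.mul_sum, ← Finset.sum_add_distrib]
      congr 1
      exact Finset.sum_congr rfl fun j _ => by ring
end

section
/- Define the n×n Hankel matrix H_n(p) over the polynomial ring ℝ[p_1,...,p_n] with last row ((n)·p_0, (n−1)·p_1, ..., 1·p_{n−1}) where p_0 = 1, entries constant along anti-diagonals, and zero above the main anti-diagonal; and let H_a^{(n)}(p) be the n×n matrix with the order-a Hankel matrix H_a(p) in its upper left corner and zeros elsewhere. Then the matrix whose (a,b) entry is Σ_{i=max(0,a+b−n−1)}^{min(a,b)−1} 4(a+b−1−2i)·p_i·p_{a+b−1−i} (with p_0 = 1) equals 4·Σ_{a=1}^n p_a·H_a^{(n)}(p). -/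
open Matrix Finset

/-- The `n×n` block Hankel matrix `Hₐ⁽ⁿ⁾(p)`: its upper-left `a×a` block is the Hankel
matrix with last row `(a·p₀, (a-1)·p₁, …, 1·p_{a-1})`, constant along anti-diagonals and
zero above the main anti-diagonal, and it is zero outside this block. -/
noncomputable def HankelBlock (n a : ℕ) (p : ℕ → ℝ) : Matrix (Fin n) (Fin n) ℝ :=
  Matrix.of fun i j =>
    if i.1 < a ∧ j.1 < a ∧ a - 1 ≤ i.1 + j.1
    then ((a - (i.1 + j.1 - (a - 1)) : ℕ) : ℝ) * p (i.1 + j.1 - (a - 1))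
    else 0

/-!
With 1-based indices, entry `(a, b)` of every `H_c⁽ⁿ⁾(p)` lies on the anti-diagonal
`s = a + b - 1`, and there `H_c⁽ⁿ⁾(p)` contributes `(2c - s)·p_{s-c}` exactly when
`max(a, b) ≤ c ≤ min(n, s)`. Substituting `i = s - c` turns `4 Σ_c p_c (2c - s) p_{s-c}` into
`Σ_i 4(s - 2i) p_i p_{s-i}` over `max(0, s - n) ≤ i ≤ min(a, b) - 1`.
-/

theorem Finset.sum_Icc_reflect {M : Type*} [AddCommMonoid M] (f : ℕ → M)
    {lo hi s : ℕ} (hlo : lo ≤ s) (hhi : hi ≤ s) :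
    ∑ k ∈ Icc lo hi, f k = ∑ k ∈ Icc (s - hi) (s - lo), f (s - k) :=
  sum_nbij' (s - ·) (s - ·) (by intro k hk; simp only [mem_Icc] at *; omega)
    (by intro k hk; simp only [mem_Icc] at *; omega)
    (by intro k hk; simp only [mem_Icc] at hk; omega)
    (by intro k hk; simp only [mem_Icc] at hk; omega)
    (by intro k hk; simp only [mem_Icc] at hk; congr 1; omega)

theorem HankelBlock_apply (n c : ℕ) (p : ℕ → ℝ) (i j : Fin n) :
    HankelBlock n c p i j =
      if max i.1 j.1 < c ∧ c ≤ i.1 + j.1 + 1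
      then ((2 * c - (i.1 + j.1 + 1) : ℕ) : ℝ) * p (i.1 + j.1 + 1 - c)
      else 0 := by
  simp only [HankelBlock, of_apply]
  split_ifs
  · rw [show i.1 + j.1 - (c - 1) = i.1 + j.1 + 1 - c by omega,
      show c - (i.1 + j.1 + 1 - c) = 2 * c - (i.1 + j.1 + 1) by omega]
  · omega
  · omega
  · rfl

theorem sum_smul_HankelBlock_apply (n : ℕ) (p : ℕ → ℝ) (i j : Fin n) :
    (∑ c ∈ Icc 1 n, p c • HankelBlock n c p) i j =
      ∑ c ∈ Icc (max i.1 j.1 + 1) (min n (i.1 + j.1 + 1)),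
        p c * (((2 * c - (i.1 + j.1 + 1) : ℕ) : ℝ) * p (i.1 + j.1 + 1 - c)) := by
  simp only [Matrix.sum_apply, Matrix.smul_apply, smul_eq_mul, HankelBlock_apply,
    mul_ite, mul_zero]
  rw [← sum_filter]
  congr 1
  ext c
  simp only [mem_filter, mem_Icc]
  omega

theorem Bn_P_matrix_Hankel_decomposition_general (n : ℕ) (p : ℕ → ℝ) :
    (Matrix.of fun a b : Fin n =>
        ∑ i ∈ Finset.Icc ((a.1 + 1) + (b.1 + 1) - (n + 1)) (min (a.1 + 1) (b.1 + 1) - 1),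
          ((4 * ((a.1 + 1) + (b.1 + 1) - 1 - 2 * i) : ℕ) : ℝ) * p i *
            p ((a.1 + 1) + (b.1 + 1) - 1 - i))
      = (4 : ℝ) • ∑ a ∈ Finset.Icc 1 n, p a • HankelBlock n a p := by
  ext a b
  set s := a.1 + b.1 + 1
  rw [Matrix.smul_apply, sum_smul_HankelBlock_apply,
    sum_Icc_reflect _ (s := s) (by omega) (min_le_right _ _), smul_eq_mul, mul_sum, of_apply]
  refine sum_congr (by congr 1 <;> omega) fun i hi => ?_
  rw [mem_Icc] at hi
  rw [show s - (s - i) = i by omega, show a.1 + 1 + (b.1 + 1) - 1 - i = s - i by omega,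
    show 4 * (a.1 + 1 + (b.1 + 1) - 1 - 2 * i) = 4 * (2 * (s - i) - s) by omega]
  push_cast
  ring

/-- Hankel decomposition of the `Bₙ` `P`-matrix: the matrix with entries
`Σ_{i=max(0,a+b-n-1)}^{min(a,b)-1} 4(a+b-1-2i)·pᵢ·p_{a+b-1-i}` (with `p₀ = 1`)
equals `4·Σ_{a=1}^{n} pₐ·Hₐ⁽ⁿ⁾(p)`. -/
theorem Bn_P_matrix_Hankel_decomposition (n : ℕ) (p : ℕ → ℝ) (hp0 : p 0 = 1) :
    (Matrix.of fun a b : Fin n =>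
        ∑ i ∈ Finset.Icc ((a.1 + 1) + (b.1 + 1) - (n + 1)) (min (a.1 + 1) (b.1 + 1) - 1),
          ((4 * ((a.1 + 1) + (b.1 + 1) - 1 - 2 * i) : ℕ) : ℝ) * p i *
            p ((a.1 + 1) + (b.1 + 1) - 1 - i))
      = (4 : ℝ) • ∑ a ∈ Finset.Icc 1 n, p a • HankelBlock n a p :=
  Bn_P_matrix_Hankel_decomposition_general n p
end

section
/- For the dihedral group I_2(m) acting on ℝ² with invariants p_1(x) = x_1² + x_2² and p_2(x) = Re[(x_1 + i·x_2)^m], the Gram matrix of gradients is P(x) = [[4·p_1(x), 2m·p_2(x)], [2m·p_2(x), m²·p_1(x)^{m−1}]]; in particular ∇p_2(x)·∇p_2(x) = m²·(x_1² + x_2²)^{m−1} and ∇p_1(x)·∇p_2(x) = 2m·p_2(x), and det P(x) = 4m²·(p_1(x)^m − p_2(x)²). -/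
/-
Identify `ℝ²` with `ℂ` via `z = x₁ + i·x₂`, so that `p₁ = |z|²` and `p₂ = Re(z^m)`. For `f`
holomorphic, the gradient of `Re f(z)` is `(Re f'(z), Re(i f'(z)))`, the vector of `conj f'(z)`.
Hence `∇p₁·∇p₂ = 2 Re(z · m z^{m-1}) = 2m p₂` and `|∇p₂|² = |m z^{m-1}|² = m² p₁^{m-1}`, while
`|∇p₁|² = 4 p₁`; the determinant is then `4p₁ · m² p₁^{m-1} - (2m p₂)²`.
-/

open Matrix

/-- The gradient of a function on `ℝ²`: the vector of partial derivatives. -/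
noncomputable def gradVec2 (f : (Fin 2 → ℝ) → ℝ) (x : Fin 2 → ℝ) : Fin 2 → ℝ :=
  fun i => fderiv ℝ f x (Pi.single i 1)

/-- The quadratic invariant of the dihedral group `I₂(m)`. -/
noncomputable def dihP1 : (Fin 2 → ℝ) → ℝ := fun x => x 0 ^ 2 + x 1 ^ 2

/-- The degree-`m` invariant of the dihedral group `I₂(m)`: `Re[(x₁ + i·x₂)^m]`. -/
noncomputable def dihP2 (m : ℕ) : (Fin 2 → ℝ) → ℝ :=
  fun x => (((x 0 : ℂ) + Complex.I * (x 1 : ℂ)) ^ m).re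

/-- The Gram matrix of gradients of the invariants of `I₂(m)`. -/
noncomputable def dihGram (m : ℕ) (x : Fin 2 → ℝ) : Matrix (Fin 2) (Fin 2) ℝ :=
  Matrix.of fun a b =>
    ∑ i : Fin 2, gradVec2 (![dihP1, dihP2 m] a) x i * gradVec2 (![dihP1, dihP2 m] b) x i

open Complex ContinuousLinearMap

/-- The factor `n` makes this hold also for `n = 0`, where `n - 1` truncates to `0`. -/
lemma natCast_mul_pow_sub_one_mul {R : Type*} [CommSemiring R] (n : ℕ) (a : R) :
    (n : R) * (a ^ (n - 1) * a) = n * a ^ n := by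
  cases n <;> simp [pow_succ]

noncomputable def toComplexCLM : (Fin 2 → ℝ) →L[ℝ] ℂ :=
  ofRealCLM.comp (proj 0) + I • ofRealCLM.comp (proj 1)

lemma toComplexCLM_apply (x : Fin 2 → ℝ) : toComplexCLM x = x 0 + I * x 1 := by
  simp [toComplexCLM]

lemma toComplexCLM_single_one (i : Fin 2) : toComplexCLM (Pi.single i 1) = basisOneI i := by
  fin_cases i <;> simp [toComplexCLM_apply]

lemma sum_mul_re_basisOneI_mul (x : Fin 2 → ℝ) (c : ℂ) :
    ∑ i, x i * (basisOneI i * c).re = (toComplexCLM x * c).re := by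
  simp [Fin.sum_univ_two, toComplexCLM_apply]
  ring

lemma sum_re_basisOneI_mul_sq (c : ℂ) :
    ∑ i, (basisOneI i * c).re ^ 2 = normSq c := by
  simp [Fin.sum_univ_two, normSq_apply]
  ring

lemma gradVec2_re_comp_toComplexCLM {f : ℂ → ℂ} {f' : ℂ} {x : Fin 2 → ℝ}
    (hf : HasDerivAt f f' (toComplexCLM x)) :
    gradVec2 (fun y => (f (toComplexCLM y)).re) x
      = fun i => (basisOneI i * f').re := by
  have h : HasFDerivAt (fun y => (f (toComplexCLM y)).re) (reCLM.comp (f' • toComplexCLM)) x :=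
    reCLM.hasFDerivAt.comp x (hf.comp_hasFDerivAt x toComplexCLM.hasFDerivAt)
  ext i
  simp [gradVec2, h.fderiv, toComplexCLM_single_one, mul_comm]

lemma gradVec2_dihP1 (x : Fin 2 → ℝ) : gradVec2 dihP1 x = (2 : ℝ) • x := by
  have hsq (j : Fin 2) : HasFDerivAt (fun y : Fin 2 → ℝ => y j ^ 2)
      ((2 * x j) • proj j : (Fin 2 → ℝ) →L[ℝ] ℝ) x := by
    simpa using (hasFDerivAt_apply (𝕜 := ℝ) (F' := fun _ : Fin 2 => ℝ) j x).pow 2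
  have h : HasFDerivAt dihP1 _ x := (hsq 0).add (hsq 1)
  ext i
  fin_cases i <;> simp [gradVec2, h.fderiv]

lemma dihP1_eq_normSq (x : Fin 2 → ℝ) : dihP1 x = normSq (toComplexCLM x) := by
  simp [dihP1, normSq_apply, toComplexCLM_apply, sq]

lemma dihP2_eq_re_pow (m : ℕ) : dihP2 m = fun y => (toComplexCLM y ^ m).re := by
  ext y; simp [dihP2, toComplexCLM_apply]

lemma gradVec2_dihP2 (m : ℕ) (x : Fin 2 → ℝ) :
    gradVec2 (dihP2 m) x
      = fun i => (basisOneI i * (m * toComplexCLM x ^ (m - 1))).re := by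
  rw [dihP2_eq_re_pow]
  exact gradVec2_re_comp_toComplexCLM (hasDerivAt_pow m _)

lemma dotProduct_gradVec2_dihP1_self (x : Fin 2 → ℝ) :
    gradVec2 dihP1 x ⬝ᵥ gradVec2 dihP1 x = 4 * dihP1 x := by
  simp [gradVec2_dihP1, dotProduct, Fin.sum_univ_two, dihP1]
  ring

lemma dotProduct_gradVec2_dihP1_dihP2 (m : ℕ) (x : Fin 2 → ℝ) :
    gradVec2 dihP1 x ⬝ᵥ gradVec2 (dihP2 m) x = 2 * m * dihP2 m x := by
  set w := toComplexCLM x with hw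
  calc gradVec2 dihP1 x ⬝ᵥ gradVec2 (dihP2 m) x
      = 2 * ∑ i, x i * (basisOneI i * (m * w ^ (m - 1))).re := by
        simp only [gradVec2_dihP1, gradVec2_dihP2, dotProduct, Pi.smul_apply, smul_eq_mul,
          Finset.mul_sum, mul_assoc, w]
    _ = 2 * (m * (w ^ (m - 1) * w)).re := by rw [sum_mul_re_basisOneI_mul, ← hw]; ring_nf
    _ = 2 * m * dihP2 m x := by
        rw [natCast_mul_pow_sub_one_mul, ← ofReal_natCast, re_ofReal_mul, dihP2_eq_re_pow,
          mul_assoc]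

lemma dotProduct_gradVec2_dihP2_self (m : ℕ) (x : Fin 2 → ℝ) :
    gradVec2 (dihP2 m) x ⬝ᵥ gradVec2 (dihP2 m) x = (m : ℝ) ^ 2 * dihP1 x ^ (m - 1) := by
  simp only [gradVec2_dihP2, dotProduct, ← sq, sum_re_basisOneI_mul_sq, map_mul, map_pow,
    normSq_natCast, dihP1_eq_normSq]

theorem dihedral_P_matrix_general (m : ℕ) (x : Fin 2 → ℝ) :
    dihGram m x
      = !![4 * dihP1 x, 2 * m * dihP2 m x;
           2 * m * dihP2 m x, (m : ℝ) ^ 2 * dihP1 x ^ (m - 1)]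
    ∧ (dihGram m x).det = 4 * (m : ℝ) ^ 2 * (dihP1 x ^ m - dihP2 m x ^ 2) := by
  have hP : dihGram m x = !![4 * dihP1 x, 2 * m * dihP2 m x;
      2 * m * dihP2 m x, (m : ℝ) ^ 2 * dihP1 x ^ (m - 1)] := by
    ext a b
    fin_cases a <;> fin_cases b
    · exact dotProduct_gradVec2_dihP1_self x
    · exact dotProduct_gradVec2_dihP1_dihP2 m x
    · exact (dotProduct_comm _ _).trans (dotProduct_gradVec2_dihP1_dihP2 m x)
    · exact dotProduct_gradVec2_dihP2_self m x
  refine ⟨hP, ?_⟩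
  rw [hP, det_fin_two_of]
  linear_combination (4 * m : ℝ) * natCast_mul_pow_sub_one_mul m (dihP1 x)

/-- `P`-matrix and discriminant of the dihedral group `I₂(m)`:
`P(x) = [[4p₁, 2m·p₂], [2m·p₂, m²·p₁^{m-1}]]` and
`det P(x) = 4m²·(p₁^m - p₂²)`. -/
theorem dihedral_P_matrix (m : ℕ) (hm : 2 ≤ m) (x : Fin 2 → ℝ) :
    dihGram m x
      = !![4 * dihP1 x, 2 * m * dihP2 m x;
           2 * m * dihP2 m x, (m : ℝ) ^ 2 * dihP1 x ^ (m - 1)]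
    ∧ (dihGram m x).det = 4 * (m : ℝ) ^ 2 * (dihP1 x ^ m - dihP2 m x ^ 2) :=
  dihedral_P_matrix_general m x
end
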